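/- Define g_1(x) = -1/((x+2)^2 log(4/3)) and g_{n+1} = -U g_n, where U is Wirsing's operator. Then for all n ≥ 1 and all x ∈ [0,1], |g_n(x)| ≤ (1/2^{n-1}) · 1/((x+2)^2 log(4/3)). -/

import Mathlib

open MeasureTheory Filter Set

/-- The Gauss map `x ↦ 1/x - ⌊1/x⌋` (sending `0` to `0`). -/
noncomputable def gaussMap (x : ℝ) : ℝ := Int.fract x⁻¹

/-- The Gauss measure `μ(B) = (1/log 2) ∫_B dx/(1+x)` on `[0,1)`. -/
noncomputable def gaussMeasure : Measure ℝ :=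
  (volume.restrict (Set.Ico (0:ℝ) 1)).withDensity
    (fun x => ENNReal.ofReal (1 / ((1 + x) * Real.log 2)))

/-- The `n`-th continued fraction digit `a_{n+1}` of `x`. -/
noncomputable def cfDigit (x : ℝ) (n : ℕ) : ℤ := ⌊(gaussMap^[n] x)⁻¹⌋

/-- The cylinder set of points of `[0,1)` whose continued fraction expansion starts with `s`. -/
noncomputable def cylinder (s : List ℕ+) : Set ℝ :=
  {x ∈ Set.Ico (0:ℝ) 1 | ∀ i (h : i < s.length), cfDigit x i = (s.get ⟨i, h⟩ : ℕ)}

/-- A point of `[0,1)` is CF-normal if every finite string of positive integers occurs among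
its continued fraction digits with limiting frequency equal to the Gauss measure of the
corresponding cylinder set. -/
noncomputable def CFNormal (x : ℝ) : Prop :=
  ∀ s : List ℕ+, s ≠ [] →
    Filter.Tendsto
      (fun n : ℕ => (Nat.card {i : ℕ | i ≤ n ∧ gaussMap^[i] x ∈ cylinder s} : ℝ) / n)
      Filter.atTop (nhds (gaussMeasure (cylinder s)).toReal)

/-- The Gauss–Kuzmin transfer operator. -/
noncomputable def transferOp (f : ℝ → ℝ) (x : ℝ) : ℝ :=
  ∑' k : ℕ, (1 + x) / (((k:ℝ) + 1 + x) * ((k:ℝ) + 2 + x)) * f (1 / ((k:ℝ) + 1 + x))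

/-- Wirsing's operator. -/
noncomputable def wirsingOp (g : ℝ → ℝ) (x : ℝ) : ℝ :=
  ∑' k : ℕ,
    (((k:ℝ) + 1) / (((k:ℝ) + 2 + x) ^ 2) *
        (∫ y in (1 / ((k:ℝ) + 2 + x))..(1 / ((k:ℝ) + 1 + x)), g y) +
      (1 + x) / (((k:ℝ) + 1 + x) ^ 3 * ((k:ℝ) + 2 + x)) * g (1 / ((k:ℝ) + 1 + x)))

/-!
Write `a y = 1 / (y + 2) ^ 2`. Wirsing's operator `U` is positive, and for `x ≥ 0` it only samples
its argument on `[0, 1]`, so `|g| ≤ C a` on `[0, 1]` gives `|U g| ≤ C U a`. Since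
`∫ a` over `[1/(k+2+x), 1/(k+1+x)]` is `1 / ((2(k+x)+3)(2(k+x)+5))`, the `k`-th term of `U a` is an
explicit rational function, dominated by `ψ k - ψ (k+1)` with `ψ 0 = a x / 2` and
`ψ k = a (x + k) / 3` for `k ≥ 1`. Telescoping gives `U a ≤ a / 2`, and induction on `n` finishes.
-/

noncomputable def wirsingTerm (g : ℝ → ℝ) (x : ℝ) (k : ℕ) : ℝ :=
  ((k:ℝ) + 1) / (((k:ℝ) + 2 + x) ^ 2) *
      (∫ y in (1 / ((k:ℝ) + 2 + x))..(1 / ((k:ℝ) + 1 + x)), g y) +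
    (1 + x) / (((k:ℝ) + 1 + x) ^ 3 * ((k:ℝ) + 2 + x)) * g (1 / ((k:ℝ) + 1 + x))

theorem wirsingOp_eq_tsum (g : ℝ → ℝ) (x : ℝ) : wirsingOp g x = ∑' k, wirsingTerm g x k := rfl

theorem wirsingTerm_const_mul (c : ℝ) (g : ℝ → ℝ) (x : ℝ) (k : ℕ) :
    wirsingTerm (fun y => c * g y) x k = c * wirsingTerm g x k := by
  simp only [wirsingTerm, intervalIntegral.integral_const_mul]
  ring

theorem wirsingOp_const_mul (c : ℝ) (g : ℝ → ℝ) (x : ℝ) :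
    wirsingOp (fun y => c * g y) x = c * wirsingOp g x := by
  simp only [wirsingOp_eq_tsum, wirsingTerm_const_mul, tsum_mul_left]

section Positivity

variable {g f : ℝ → ℝ} {x : ℝ}

theorem abs_wirsingTerm_le (hf : IntervalIntegrable f volume 0 1)
    (hgf : ∀ y ∈ Icc (0:ℝ) 1, |g y| ≤ f y) (hx : 0 ≤ x) (k : ℕ) :
    |wirsingTerm g x k| ≤ wirsingTerm f x k := by
  have hk : (0:ℝ) ≤ k := k.cast_nonneg
  have hlo : 0 < 1 / ((k:ℝ) + 2 + x) := by positivity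
  have hlohi : 1 / ((k:ℝ) + 2 + x) ≤ 1 / ((k:ℝ) + 1 + x) :=
    one_div_le_one_div_of_le (by positivity) (by linarith)
  have hhi : 1 / ((k:ℝ) + 1 + x) ≤ 1 := by
    rw [div_le_one (by positivity)]; linarith
  have hsub : uIcc (1 / ((k:ℝ) + 2 + x)) (1 / ((k:ℝ) + 1 + x)) ⊆ uIcc 0 1 := by
    rw [uIcc_of_le hlohi, uIcc_of_le zero_le_one]
    exact Icc_subset_Icc hlo.le hhi
  have hint : |∫ y in (1 / ((k:ℝ) + 2 + x))..(1 / ((k:ℝ) + 1 + x)), g y|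
      ≤ ∫ y in (1 / ((k:ℝ) + 2 + x))..(1 / ((k:ℝ) + 1 + x)), f y :=
    intervalIntegral.norm_integral_le_of_norm_le (f := g) hlohi
      (Eventually.of_forall fun y hy => hgf y ⟨hlo.le.trans hy.1.le, hy.2.trans hhi⟩)
      (hf.mono_set hsub)
  have hnode := hgf _ ⟨by positivity, hhi⟩
  have hA : 0 ≤ ((k:ℝ) + 1) / (((k:ℝ) + 2 + x) ^ 2) := by positivity
  have hB : 0 ≤ (1 + x) / (((k:ℝ) + 1 + x) ^ 3 * ((k:ℝ) + 2 + x)) := by positivity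
  calc |wirsingTerm g x k|
      ≤ ((k:ℝ) + 1) / (((k:ℝ) + 2 + x) ^ 2) *
            |∫ y in (1 / ((k:ℝ) + 2 + x))..(1 / ((k:ℝ) + 1 + x)), g y| +
          (1 + x) / (((k:ℝ) + 1 + x) ^ 3 * ((k:ℝ) + 2 + x)) * |g (1 / ((k:ℝ) + 1 + x))| := by
        refine (abs_add_le _ _).trans_eq ?_
        rw [abs_mul, abs_mul, abs_of_nonneg hA, abs_of_nonneg hB]
    _ ≤ wirsingTerm f x k := by unfold wirsingTerm; gcongr

theorem abs_wirsingOp_le (hf : IntervalIntegrable f volume 0 1)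
    (hgf : ∀ y ∈ Icc (0:ℝ) 1, |g y| ≤ f y) (hx : 0 ≤ x) (hs : Summable (wirsingTerm f x)) :
    |wirsingOp g x| ≤ wirsingOp f x := by
  have hterm := abs_wirsingTerm_le hf hgf hx
  rw [wirsingOp_eq_tsum, wirsingOp_eq_tsum, ← Real.norm_eq_abs]
  have habs : Summable fun k => ‖wirsingTerm g x k‖ :=
    hs.of_nonneg_of_le (fun _ => norm_nonneg _) hterm
  exact (norm_tsum_le_tsum_norm habs).trans (habs.tsum_le_tsum hterm hs)

end Positivity

theorem sum_range_le_of_le_sub_succ {f ψ : ℕ → ℝ} (hψ : ∀ k, 0 ≤ ψ k)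
    (h : ∀ k, f k ≤ ψ k - ψ (k + 1)) (n : ℕ) : ∑ k ∈ Finset.range n, f k ≤ ψ 0 :=
  calc ∑ k ∈ Finset.range n, f k ≤ ∑ k ∈ Finset.range n, (ψ k - ψ (k + 1)) :=
        Finset.sum_le_sum fun k _ => h k
    _ = ψ 0 - ψ n := Finset.sum_range_sub' ψ n
    _ ≤ ψ 0 := sub_le_self _ (hψ n)

noncomputable def wirsingWeight (y : ℝ) : ℝ := 1 / (y + 2) ^ 2

theorem continuousOn_wirsingWeight : ContinuousOn wirsingWeight (Ioi (-2)) :=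
  continuousOn_const.div (by fun_prop) fun y hy => by
    have : 0 < y + 2 := by linarith [mem_Ioi.mp hy]
    positivity

theorem intervalIntegrable_wirsingWeight {a b : ℝ} (ha : -2 < a) (hab : a ≤ b) :
    IntervalIntegrable wirsingWeight volume a b :=
  (continuousOn_wirsingWeight.mono fun y hy => mem_Ioi.mpr <| by
    rw [uIcc_of_le hab] at hy; linarith [hy.1]).intervalIntegrable

theorem integral_wirsingWeight {a b : ℝ} (ha : -2 < a) (hab : a ≤ b) :
    ∫ y in a..b, wirsingWeight y = 1 / (a + 2) - 1 / (b + 2) := by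
  have hpos : ∀ y ∈ uIcc a b, 0 < y + 2 := fun y hy => by
    rw [uIcc_of_le hab] at hy; linarith [hy.1]
  have hderiv : ∀ y ∈ uIcc a b, HasDerivAt (fun t => -(t + 2)⁻¹) (wirsingWeight y) y := by
    intro y hy
    refine ((hasDerivAt_inv (hpos y hy).ne').comp_add_const y 2).fun_neg.congr_deriv ?_
    rw [wirsingWeight, neg_neg, one_div]
  rw [intervalIntegral.integral_eq_sub_of_hasDerivAt hderiv
    (intervalIntegrable_wirsingWeight ha hab)]
  ring

theorem wirsingTerm_wirsingWeight {x : ℝ} (hx : 0 ≤ x) (k : ℕ) :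
    wirsingTerm wirsingWeight x k =
      ((k:ℝ) + 1) / (((k:ℝ) + x + 2) ^ 2 * (2 * ((k:ℝ) + x) + 3) * (2 * ((k:ℝ) + x) + 5)) +
        (1 + x) / (((k:ℝ) + x + 1) * ((k:ℝ) + x + 2) * (2 * ((k:ℝ) + x) + 3) ^ 2) := by
  have hk : (0:ℝ) ≤ k := k.cast_nonneg
  rw [wirsingTerm, integral_wirsingWeight (by linarith [show 0 < 1 / ((k:ℝ) + 2 + x) by positivity])
    (one_div_le_one_div_of_le (by positivity) (by linarith)), wirsingWeight]
  field_simp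
  ring

theorem wirsingTerm_wirsingWeight_zero_le {x : ℝ} (hx : 0 ≤ x) :
    wirsingTerm wirsingWeight x 0 ≤ wirsingWeight x / 2 - wirsingWeight (x + 1) / 3 := by
  rw [wirsingTerm_wirsingWeight hx, ← sub_nonneg]
  simp only [wirsingWeight, Nat.cast_zero]
  -- after clearing denominators the numerator has nonnegative coefficients
  field_simp
  ring_nf
  positivity

theorem wirsingTerm_wirsingWeight_succ_le {x : ℝ} (hx : 0 ≤ x) (k : ℕ) :
    wirsingTerm wirsingWeight x (k + 1) ≤
      wirsingWeight (x + k + 1) / 3 - wirsingWeight (x + k + 2) / 3 := by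
  rw [wirsingTerm_wirsingWeight hx, ← sub_nonneg]
  simp only [wirsingWeight, Nat.cast_add, Nat.cast_one]
  field_simp
  ring_nf
  positivity

theorem wirsingTerm_wirsingWeight_nonneg {x : ℝ} (hx : 0 ≤ x) (k : ℕ) :
    0 ≤ wirsingTerm wirsingWeight x k := by
  rw [wirsingTerm_wirsingWeight hx]
  positivity

theorem wirsingOp_wirsingWeight_le {x : ℝ} (hx : 0 ≤ x) :
    Summable (wirsingTerm wirsingWeight x) ∧ wirsingOp wirsingWeight x ≤ wirsingWeight x / 2 := by
  set ψ : ℕ → ℝ := fun k => if k = 0 then wirsingWeight x / 2 else wirsingWeight (x + k) / 3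
  have hψ : ∀ k, 0 ≤ ψ k := by
    intro k
    simp only [ψ, wirsingWeight]
    split_ifs <;> positivity
  have htel : ∀ k, wirsingTerm wirsingWeight x k ≤ ψ k - ψ (k + 1) := by
    rintro (_ | k)
    · simpa [ψ] using wirsingTerm_wirsingWeight_zero_le hx
    · simpa [ψ, add_assoc, one_add_one_eq_two] using wirsingTerm_wirsingWeight_succ_le hx k
  have hsum := sum_range_le_of_le_sub_succ hψ htel
  exact ⟨summable_of_sum_range_le (wirsingTerm_wirsingWeight_nonneg hx) hsum,
    Real.tsum_le_of_sum_range_le (wirsingTerm_wirsingWeight_nonneg hx) hsum⟩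

theorem wirsing_iterates_bound (g : ℕ → ℝ → ℝ)
    (hg1 : ∀ x, g 1 x = -1 / ((x + 2)^2 * Real.log (4/3)))
    (hrec : ∀ n ≥ 1, ∀ x, g (n + 1) x = - wirsingOp (g n) x) :
    ∀ n ≥ 1, ∀ x ∈ Set.Icc (0:ℝ) 1,
      |g n x| ≤ (1 / 2^(n-1)) * (1 / ((x + 2)^2 * Real.log (4/3))) := by
  have hlog : 0 < Real.log (4/3) := Real.log_pos (by norm_num)
  suffices h : ∀ n ≥ 1, ∀ y ∈ Icc (0:ℝ) 1,
      |g n y| ≤ (2 ^ (n - 1) * Real.log (4/3))⁻¹ * wirsingWeight y by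
    intro n hn x hx
    convert h n hn x hx using 1
    rw [wirsingWeight]
    field_simp
  intro n hn
  induction n, hn using Nat.le_induction with
  | base =>
    intro y hy
    have hy0 := hy.1
    rw [hg1, wirsingWeight, abs_div, abs_neg, abs_one, abs_of_pos (by positivity)]
    field_simp
    norm_num
  | succ n hn ih =>
    intro x hx
    set c := (2 ^ (n - 1) * Real.log (4/3))⁻¹
    obtain ⟨hs, hle⟩ := wirsingOp_wirsingWeight_le hx.1
    have hint : IntervalIntegrable (fun y => c * wirsingWeight y) volume 0 1 :=
      (intervalIntegrable_wirsingWeight (by norm_num) zero_le_one).const_mul c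
    calc |g (n + 1) x| = |wirsingOp (g n) x| := by rw [hrec n hn x, abs_neg]
      _ ≤ wirsingOp (fun y => c * wirsingWeight y) x :=
        abs_wirsingOp_le hint ih hx.1 <|
          (hs.mul_left c).congr fun k => (wirsingTerm_const_mul c wirsingWeight x k).symm
      _ = c * wirsingOp wirsingWeight x := wirsingOp_const_mul c wirsingWeight x
      _ ≤ c * (wirsingWeight x / 2) := by gcongr
      _ = (2 ^ (n + 1 - 1) * Real.log (4/3))⁻¹ * wirsingWeight x := by
        obtain ⟨m, rfl⟩ := Nat.exists_eq_add_of_le' hn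
        simp only [c, Nat.add_sub_cancel, pow_succ]
        ring
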